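/- For any three-player impartial game G, the sum G + G + G is never an N-game (the first player cannot win the threefold sum of a game with itself). -/

import Mathlib

/-!
The second and third players play copycat. After the first player moves one copy of `G`
to an option `G'`, the second player moves another copy to the same `G'`, and the third
player moves the last copy to `G'` as well. This reaches `G' + G' + G'`, which by induction
is not an `N`-game; so the first player's move never reaches a `P`-game.
-/

/-- Three-player impartial games: well-founded game trees. -/
inductive G3 : Type 1 where
  | mk : (ι : Type) → (ι → G3) → G3

namespace G3

/-- The index type of options (moves) of a game. -/
def moves : G3 → Type
  | mk ι _ => ι

/-- The option of a game corresponding to a move. -/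
def moveFn : (g : G3) → moves g → G3
  | mk _ f => f

/-- Disjunctive sum: move in exactly one component. -/
noncomputable def add : G3 → G3 → G3 :=
  G3.rec (fun ι f ihf =>
    G3.rec (fun κ g ihg =>
      mk (ι ⊕ κ) (fun x =>
        match x with
        | Sum.inl i => ihf i (mk κ g)
        | Sum.inr j => ihg j)))

/-- The four outcome types of a three-player impartial game. -/
inductive PType : Type
  | N | O | P | Q
deriving DecidableEq

open Classical in
/-- The type of a game: `N` iff some option is a `P`-game; `O` iff it has at least
one option and all options are `N`-games; `P` iff all options are `O`-games;
`Q` otherwise. -/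
noncomputable def typ : G3 → PType
  | mk ι f =>
    if ∃ i, typ (f i) = PType.P then PType.N
    else if Nonempty ι ∧ ∀ i, typ (f i) = PType.N then PType.O
    else if ∀ i, typ (f i) = PType.O then PType.P
    else PType.Q

/-- The Nim heap of size `n`: options are heaps of sizes `0, …, n-1`. -/
def nim : ℕ → G3
  | n => mk (Fin n) (fun i => nim i)
termination_by n => n
decreasing_by exact i.isLt

/-- The sum of `n` Nim heaps of size 1. -/
noncomputable def ones : ℕ → G3
  | 0 => nim 0
  | n + 1 => add (ones n) (nim 1)

def IsOption (a g : G3) : Prop :=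
  ∃ i, moveFn g i = a

theorem isOption_wf : WellFounded IsOption :=
  ⟨fun g => by
    induction g with
    | mk ι f ih => exact ⟨_, fun a ⟨i, hi⟩ => hi ▸ ih i⟩⟩

theorem typ_ne_N {g : G3} (h : ∀ a, IsOption a g → typ a ≠ PType.P) : typ g ≠ PType.N := by
  cases g with
  | mk ι f =>
    rw [typ, if_neg (by push Not; exact fun i => h _ ⟨i, rfl⟩)]
    split_ifs <;> decide

theorem typ_ne_O {a g : G3} (hag : IsOption a g) (ha : typ a ≠ PType.N) :
    typ g ≠ PType.O := by
  obtain ⟨i, rfl⟩ := hag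
  cases g with
  | mk ι f =>
    rw [typ]
    split_ifs with _ hO
    exacts [by decide, absurd (hO.2 i) ha, by decide, by decide]

theorem typ_ne_P {a g : G3} (hag : IsOption a g) (ha : typ a ≠ PType.O) :
    typ g ≠ PType.P := by
  obtain ⟨i, rfl⟩ := hag
  cases g with
  | mk ι f =>
    rw [typ]
    split_ifs with _ _ hP
    exacts [by decide, by decide, absurd (hP i) ha, by decide]

theorem isOption_add_left {a a' : G3} (h : IsOption a' a) (b : G3) :
    IsOption (add a' b) (add a b) := by
  obtain ⟨i, rfl⟩ := h
  cases a; cases b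
  exact ⟨Sum.inl i, rfl⟩

theorem isOption_add_right (a : G3) {b b' : G3} (h : IsOption b' b) :
    IsOption (add a b') (add a b) := by
  obtain ⟨j, rfl⟩ := h
  cases a; cases b
  exact ⟨Sum.inr j, rfl⟩

theorem IsOption.of_add {a b c : G3} (h : IsOption c (add a b)) :
    (∃ a', IsOption a' a ∧ c = add a' b) ∨ (∃ b', IsOption b' b ∧ c = add a b') := by
  obtain ⟨x, rfl⟩ := h
  cases a; cases b
  rcases x with i | j
  · exact Or.inl ⟨_, ⟨i, rfl⟩, rfl⟩
  · exact Or.inr ⟨_, ⟨j, rfl⟩, rfl⟩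

theorem treble_not_N (G : G3) : typ (add (add G G) G) ≠ PType.N := by
  induction G using isOption_wf.induction with
  | _ G ih =>
  refine typ_ne_N fun c hc => ?_
  rcases hc.of_add with ⟨d, hd, rfl⟩ | ⟨G', hG', rfl⟩
  · rcases hd.of_add with ⟨G', hG', rfl⟩ | ⟨G', hG', rfl⟩
    · exact typ_ne_P (isOption_add_left (isOption_add_right G' hG') G)
        (typ_ne_O (isOption_add_right _ hG') (ih G' hG'))
    · exact typ_ne_P (isOption_add_left (isOption_add_left hG' G') G)
        (typ_ne_O (isOption_add_right _ hG') (ih G' hG'))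
  · exact typ_ne_P (isOption_add_left (isOption_add_left hG' G) G')
      (typ_ne_O (isOption_add_left (isOption_add_right G' hG') G') (ih G' hG'))

end G3
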